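/- Let γ : (0,∞) → ℝ be non-decreasing and positive, let m > 0, and let v : Ω → ℝ be a measurable function on a finite measure space (Ω, μ) with v ≥ v* > 0 a.e. Then m·∫_Ω γ(v) dμ ≤ ∫_Ω (γ(v) − γ(m))·(v − m) dμ + m·γ(2m)·μ(Ω). -/

import Mathlib

open MeasureTheory

theorem stmt9 {Ω : Type*} [MeasurableSpace Ω] (μ : Measure Ω) [IsFiniteMeasure μ]
    (γ : ℝ → ℝ) (m vstar : ℝ) (hm : 0 < m) (hv : 0 < vstar)
    (hmono : MonotoneOn γ (Set.Ioi 0))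
    (hpos : ∀ s > (0:ℝ), 0 < γ s)
    (v : Ω → ℝ) (hvm : Measurable v)
    (hvlb : ∀ᵐ x ∂μ, vstar ≤ v x)
    (hint1 : Integrable (fun x => γ (v x)) μ)
    (hint2 : Integrable (fun x => (γ (v x) - γ m) * (v x - m)) μ) :
    m * ∫ x, γ (v x) ∂μ ≤
      (∫ x, (γ (v x) - γ m) * (v x - m) ∂μ) + m * γ (2 * m) * (μ Set.univ).toReal := by
  have h2m : (2 * m) ∈ Set.Ioi (0:ℝ) := by simp; linarith
  have hmmem : m ∈ Set.Ioi (0:ℝ) := hm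
  have hpt : ∀ᵐ x ∂μ, m * γ (v x) ≤
      (γ (v x) - γ m) * (v x - m) + m * γ (2 * m) := by
    filter_upwards [hvlb] with x hx
    have htpos : (0:ℝ) < v x := lt_of_lt_of_le hv hx
    have htmem : v x ∈ Set.Ioi (0:ℝ) := htpos
    rcases le_or_gt (v x) (2 * m) with h | h
    · have h1 : γ (v x) ≤ γ (2 * m) := hmono htmem h2m h
      have h2 : (0:ℝ) ≤ (γ (v x) - γ m) * (v x - m) := by
        rcases le_or_gt m (v x) with h3 | h3
        · exact mul_nonneg (by linarith [hmono hmmem htmem h3]) (by linarith)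
        · have h4 := hmono htmem hmmem h3.le
          exact mul_nonneg_of_nonpos_of_nonpos (by linarith) (by linarith)
      nlinarith
    · have h1 : γ m ≤ γ (v x) := hmono hmmem htmem (by linarith)
      have h2 : γ m ≤ γ (2 * m) := hmono hmmem h2m (by linarith)
      have h3 : m * (γ (v x) - γ m) ≤ (γ (v x) - γ m) * (v x - m) := by
        nlinarith
      nlinarith
  have hintc : Integrable (fun _ : Ω => m * γ (2 * m)) μ := integrable_const _
  calc m * ∫ x, γ (v x) ∂μ = ∫ x, m * γ (v x) ∂μ := (integral_const_mul m _).symm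
    _ ≤ ∫ x, ((γ (v x) - γ m) * (v x - m) + m * γ (2 * m)) ∂μ :=
        integral_mono_ae (hint1.const_mul m) (hint2.add hintc) hpt
    _ = (∫ x, (γ (v x) - γ m) * (v x - m) ∂μ) + ∫ _x, m * γ (2 * m) ∂μ :=
        integral_add hint2 hintc
    _ = (∫ x, (γ (v x) - γ m) * (v x - m) ∂μ) + m * γ (2 * m) * (μ Set.univ).toReal := by
        rw [integral_const, smul_eq_mul, mul_comm]; rfl
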